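/- Let (X, μ, T) be a rank-one measure-preserving transformation with cutting parameter r_n = 4 and spacer parameter s_{n,1} = 0, s_{n,2} = 2^{n+1}, s_{n,3} = 0, s_{n,4} = 0 for all n. Then for every odd integer a ≥ 3, T does not factor onto ℤ/aℤ. -/

import Mathlib

open MeasureTheory ENNReal

noncomputable section

/-- `T` factors onto the cyclic system `ℤ/kℤ` (:= `{0,…,k-1}` with uniform measure and
the `+1 mod k` map): there is a measurable map `φ` with values (a.e.) in `{0,…,k-1}`,
whose fibers all have measure `1/k`, and which intertwines `T` with `+1 mod k` a.e. -/
def FactorsOntoCyclic {X : Type*} [MeasurableSpace X] (μ : Measure X) (T : X → X)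
    (k : ℕ) : Prop :=
  ∃ φ : X → ℕ, Measurable φ ∧ (∀ᵐ x ∂μ, φ x < k) ∧
    (∀ j < k, μ (φ ⁻¹' {j}) = 1 / (k : ℝ≥0∞)) ∧
    (∀ᵐ x ∂μ, φ (T x) = (φ x + 1) % k)

/-- `φ` is a factor map from `(X, μ, T)` onto the odometer determined by the sequence
`(k n)` (with `k n > 1` and `k n ∣ k (n+1)`): `φ x` is a.e. a compatible sequence of
residues, the cylinder sets `{x | φ x n = j}` have the Haar measure `1 / k n`, and `φ`
intertwines `T` with the `+1` map of the odometer a.e.  Since the compatible sequences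
with the correct cylinder measures carry a unique probability measure (the Haar
measure of the inverse limit group), this says exactly that `φ` is a measure-preserving
factor map onto the odometer. -/
def IsOdometerFactorMap {X : Type*} [MeasurableSpace X] (μ : Measure X) (T : X → X)
    (k : ℕ → ℕ) (φ : X → ℕ → ℕ) : Prop :=
  Measurable φ ∧
    (∀ᵐ x ∂μ, (∀ n, φ x n < k n) ∧ ∀ m n, m ≤ n → φ x n % k m = φ x m) ∧
    (∀ n, ∀ j < k n, μ {x | φ x n = j} = 1 / (k n : ℝ≥0∞)) ∧
    (∀ᵐ x ∂μ, ∀ n, φ (T x) n = (φ x n + 1) % k n)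

/-- `T` factors onto the odometer determined by `(k n)`. -/
def FactorsOntoOdometer {X : Type*} [MeasurableSpace X] (μ : Measure X) (T : X → X)
    (k : ℕ → ℕ) : Prop :=
  ∃ φ : X → ℕ → ℕ, IsOdometerFactorMap μ T k φ

/-- `T` is isomorphic to the odometer determined by `(k n)`: there is a factor map onto
the odometer which is invertible on a set of full measure. -/
def IsomorphicToOdometer {X : Type*} [MeasurableSpace X] (μ : Measure X) (T : X → X)
    (k : ℕ → ℕ) : Prop :=
  ∃ φ : X → ℕ → ℕ, IsOdometerFactorMap μ T k φ ∧
    ∃ ψ : (ℕ → ℕ) → X, Measurable ψ ∧ ∀ᵐ x ∂μ, ψ (φ x) = x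

/-- A rank-one measure-preserving transformation of `(X, μ)`, presented by its cutting
and stacking data: the transformation `T` (invertible a.e., measure-preserving), the
cutting parameter `r`, the spacer parameter `s` (with `s n i` meaningful for
`1 ≤ i ≤ r n`), the tower heights `h`, the tower bases `B n`, the pieces `Bp n i` of
the base (`1 ≤ i ≤ r n`), and the spacer levels `C n i j` (`1 ≤ j ≤ s n i`). -/
structure RankOne (X : Type*) [MeasurableSpace X] (μ : Measure X) where
  T : X → X
  Tinv : X → X
  mpT : MeasurePreserving T μ μ
  mpTinv : MeasurePreserving Tinv μ μ
  inv_left : ∀ᵐ x ∂μ, Tinv (T x) = x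
  inv_right : ∀ᵐ x ∂μ, T (Tinv x) = x
  r : ℕ → ℕ
  s : ℕ → ℕ → ℕ
  h : ℕ → ℕ
  B : ℕ → Set X
  Bp : ℕ → ℕ → Set X
  C : ℕ → ℕ → ℕ → Set X
  r_gt_one : ∀ n, 1 < r n
  h_zero : h 0 = 1
  h_succ : ∀ n, h (n + 1) = r n * h n + ∑ i ∈ Finset.Icc 1 (r n), s n i
  finiteness : Summable fun n => ((h (n + 1) - r n * h n : ℕ) : ℝ) / (h (n + 1) : ℝ)
  B_meas : ∀ n, MeasurableSet (B n)
  Bp_meas : ∀ n i, MeasurableSet (Bp n i)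
  C_meas : ∀ n i j, MeasurableSet (C n i j)
  Bp_union : ∀ n, (⋃ i ∈ Finset.Icc 1 (r n), Bp n i) = B n
  Bp_disjoint : ∀ n, ∀ i ∈ Finset.Icc 1 (r n), ∀ j ∈ Finset.Icc 1 (r n), i ≠ j →
    Disjoint (Bp n i) (Bp n j)
  Bp_measure : ∀ n, ∀ i ∈ Finset.Icc 1 (r n), μ (Bp n i) = μ (B n) / (r n : ℝ≥0∞)
  levels_disjoint : ∀ n, ∀ i j, i < j → j < h n → Disjoint (T^[i] '' B n) (T^[j] '' B n)
  top_to_spacer : ∀ n, ∀ i ∈ Finset.Icc 1 (r n), s n i ≠ 0 → T^[h n] '' Bp n i = C n i 1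
  top_to_next : ∀ n i, 1 ≤ i → i < r n → s n i = 0 → T^[h n] '' Bp n i = Bp n (i + 1)
  spacer_step : ∀ n, ∀ i ∈ Finset.Icc 1 (r n), ∀ j, 1 ≤ j → j < s n i →
    T '' C n i j = C n i (j + 1)
  spacer_to_next : ∀ n i, 1 ≤ i → i < r n → s n i ≠ 0 → T '' C n i (s n i) = Bp n (i + 1)
  base_succ : ∀ n, B (n + 1) = Bp n 1
  levels_dense : ∀ A : Set X, MeasurableSet A → ∀ ε : ℝ≥0∞, 0 < ε →
    ∃ n, ∃ J : Finset ℕ, (∀ i ∈ J, i < h n) ∧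
      μ (symmDiff A (⋃ i ∈ J, T^[i] '' B n)) < ε

open scoped Classical in
/-- `R.I m n` is the set of indices `i < h n` such that the level `T^[i] '' (B n)` of the
stage-`n` tower is contained in the stage-`m` base `B m`. -/
def RankOne.I {X : Type*} [MeasurableSpace X] {μ : Measure X} (R : RankOne X μ)
    (m n : ℕ) : Finset ℕ :=
  (Finset.range (R.h n)).filter fun i => R.T^[i] '' R.B n ⊆ R.B m

end

/-!
Let `A` be the fibre over `0` of a factor map onto `ℤ/aℤ`: then `μ A = 1/a`, and
`A ∩ T^{-N} A` is null unless `a ∣ N`. Approximate `A` within `ε` by a union `U` of levels of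
some tower `n`. The first copy of that tower is carried onto the second by `T^{h_n}`, the second
onto the third by `T^{h_n + 2^{n+1}}`. If `a` did not divide the return time `N`, the returning
copy, a quarter of `U`, would lie in `U ∩ T^{-N} U`, of measure at most `2ε`; for small `ε` this
contradicts `μ A = 1/a`. Hence `a` divides `h_n` and `h_n + 2^{n+1}`, so `a ∣ 2^{n+1}`.

As `T` is invertible only almost everywhere, a level `T^i(B_n)` need not be measurable, and its
outer measure exceeds `μ(B_n)` by at most the outer measure of its part in the last copy of each
later tower. These parts decrease, and each is a single level of a later tower, hence lies nearly
inside or nearly outside any measurable set; since the space has no atoms, this forces their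
outer measures to tend to `0`.
-/

open MeasureTheory Set Function Filter

section MeasureTheory

variable {X : Type*} [MeasurableSpace X] {μ : Measure X}

theorem ENNReal.add_le_add_of_forall_add_succ_le {a b : ℕ → ℝ≥0∞} (hb : ∀ k, b k ≠ ⊤)
    (h : ∀ k, a k + b (k + 1) ≤ b k + a (k + 1)) (k : ℕ) : a 0 + b k ≤ b 0 + a k := by
  induction k with
  | zero => rw [add_comm]
  | succ k ih =>
    refine (ENNReal.add_le_add_iff_right (hb k)).1 ?_
    calc a 0 + b (k + 1) + b k = a 0 + b k + b (k + 1) := add_right_comm _ _ _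
      _ ≤ b 0 + (a k + b (k + 1)) := by rw [← add_assoc]; gcongr
      _ ≤ b 0 + (b k + a (k + 1)) := add_le_add le_rfl (h k)
      _ = b 0 + a (k + 1) + b k := by ring

theorem MeasureTheory.MeasurePreserving.measure_le_image {Y : Type*} [MeasurableSpace Y]
    {ν : Measure Y} {f : X → Y} (hf : MeasurePreserving f μ ν) (s : Set X) :
    μ s ≤ ν (f '' s) :=
  (measure_mono (subset_preimage_image f s)).trans (hf.measure_preimage_le _)

theorem MeasureTheory.MeasurePreserving.measure_inter_preimage_le {f : X → X}
    (hf : MeasurePreserving f μ μ) (A U : Set X) :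
    μ (U ∩ f ⁻¹' U) ≤ μ (A ∩ f ⁻¹' A) + 2 * μ (U \ A) := by
  have hsub : U ∩ f ⁻¹' U ⊆ (A ∩ f ⁻¹' A) ∪ ((U \ A) ∪ f ⁻¹' (U \ A)) := by
    rintro x ⟨hx, hfx⟩
    by_cases hxA : x ∈ A
    · by_cases hfxA : f x ∈ A
      · exact Or.inl ⟨hxA, hfxA⟩
      · exact Or.inr (Or.inr ⟨hfx, hfxA⟩)
    · exact Or.inr (Or.inl ⟨hx, hxA⟩)
  calc μ (U ∩ f ⁻¹' U)
      ≤ μ (A ∩ f ⁻¹' A) + (μ (U \ A) + μ (f ⁻¹' (U \ A))) :=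
        (measure_mono hsub).trans
          ((measure_union_le _ _).trans (add_le_add le_rfl (measure_union_le _ _)))
    _ ≤ μ (A ∩ f ⁻¹' A) + 2 * μ (U \ A) := by
        rw [two_mul]
        exact add_le_add le_rfl (add_le_add le_rfl (hf.measure_preimage_le _))

theorem exists_subset_measure_pos_lt [StandardBorelSpace X] [IsFiniteMeasure μ]
    [NullSingletonClass μ] {s : Set X} (hs : MeasurableSet s) (hpos : 0 < μ s) :
    ∃ t ⊆ s, MeasurableSet t ∧ 0 < μ t ∧ μ t < μ s := by
  by_contra! hsplit
  set ν : Measure X := (μ s)⁻¹ • μ.restrict s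
  have hν : ∀ t, ν t = (μ s)⁻¹ * μ (t ∩ s) := fun t => by
    simp [ν, Measure.restrict_apply' hs]
  have hcancel : (μ s)⁻¹ * μ s = 1 := ENNReal.inv_mul_cancel hpos.ne' (measure_ne_top μ s)
  -- Without a splitting, the normalized restriction would be a Dirac mass.
  have : IsProbabilityMeasure ν := ⟨by rw [hν, univ_inter, hcancel]⟩
  have : IsZeroOneMeasure ν := ⟨fun t ht => by
    rw [hν]
    rcases eq_zero_or_pos (μ (t ∩ s)) with h0 | h0
    · exact Or.inl (by rw [h0, mul_zero])
    · refine Or.inr ?_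
      rw [le_antisymm (measure_mono inter_subset_right)
        (hsplit _ inter_subset_right (ht.inter hs) h0), hcancel]⟩
  obtain ⟨x, hx⟩ := IsZeroOneMeasure.exists_eq_dirac (μ := ν)
  have h1 : ν {x} = 1 := by rw [hx, Measure.dirac_apply_of_mem (mem_singleton x)]
  rw [hν, measure_mono_null inter_subset_left (measure_singleton x), mul_zero] at h1
  exact zero_ne_one h1

theorem Antitone.exists_measurableSet_measure_eq_iInf [IsFiniteMeasure μ] {S : ℕ → Set X}
    (hS : Antitone S) :
    ∃ H, MeasurableSet H ∧ μ H = ⨅ N, μ (S N) ∧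
      ∀ N M, MeasurableSet M → μ (H ∩ M) ≤ μ (S N ∩ M) := by
  refine ⟨⋂ N, toMeasurable μ (S N), .iInter fun N => measurableSet_toMeasurable μ _, ?_,
    fun N M hM => ?_⟩
  · rw [measure_iInter_eq_iInf_measure_iInter_le
      (fun N => (measurableSet_toMeasurable μ _).nullMeasurableSet) ⟨0, measure_ne_top μ _⟩]
    refine iInf_congr fun N => le_antisymm ?_ ?_
    · refine (measure_mono ?_).trans_eq (measure_toMeasurable (S N))
      exact fun x hx => mem_iInter₂.1 hx N le_rfl
    · exact measure_mono (subset_iInter₂ fun j hj => (hS hj).trans (subset_toMeasurable μ _))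
  · calc μ ((⋂ N, toMeasurable μ (S N)) ∩ M) ≤ μ (toMeasurable μ (S N) ∩ M) :=
          measure_mono (inter_subset_inter_left M (iInter_subset _ N))
      _ = μ (S N ∩ M) := Measure.measure_toMeasurable_inter hM (measure_ne_top μ _)

theorem Antitone.iInf_measure_eq_zero [StandardBorelSpace X] [IsFiniteMeasure μ]
    [NullSingletonClass μ] {S : ℕ → Set X} (hS : Antitone S)
    (hsep : ∀ t, MeasurableSet t → ∀ ε > 0, ∃ N, μ (S N ∩ t) < ε ∨ μ (S N \ t) < ε) :
    ⨅ N, μ (S N) = 0 := by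
  obtain ⟨H, hHm, hHμ, hH⟩ := hS.exists_measurableSet_measure_eq_iInf (μ := μ)
  rw [← hHμ]
  by_contra hH0
  obtain ⟨t, htH, htm, ht0, htH'⟩ := exists_subset_measure_pos_lt hHm (pos_iff_ne_zero.2 hH0)
  have hdiff : 0 < μ (H \ t) := by
    rw [measure_sdiff htH htm.nullMeasurableSet (measure_ne_top μ t)]
    exact tsub_pos_of_lt htH'
  obtain ⟨N, hN | hN⟩ := hsep t htm _ (lt_min ht0 hdiff)
  · have hle := hH N t htm
    rw [inter_eq_self_of_subset_right htH] at hle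
    exact (hle.trans_lt (hN.trans_le (min_le_left _ _))).false
  · have hle := hH N tᶜ htm.compl
    rw [← sdiff_eq, ← sdiff_eq] at hle
    exact (hle.trans_lt (hN.trans_le (min_le_right _ _))).false

theorem FactorsOntoCyclic.exists_measure_inter_preimage_iterate_eq_zero {T : X → X}
    (hT : MeasurePreserving T μ μ) {a : ℕ} (ha : 0 < a) (h : FactorsOntoCyclic μ T a) :
    ∃ A, MeasurableSet A ∧ μ A = 1 / a ∧ ∀ N, ¬ a ∣ N → μ (A ∩ T^[N] ⁻¹' A) = 0 := by
  obtain ⟨φ, hφm, hφlt, hφμ, hφT⟩ := h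
  have hiter : ∀ N, ∀ᵐ x ∂μ, φ (T^[N] x) = (φ x + N) % a := by
    intro N
    induction N with
    | zero => filter_upwards [hφlt] with x hx using (Nat.mod_eq_of_lt hx).symm
    | succ N ih =>
      filter_upwards [hT.quasiMeasurePreserving.ae ih, hφT] with x h1 h2
      rw [iterate_succ_apply, h1, h2, Nat.mod_add_mod, add_right_comm, add_assoc]
  refine ⟨φ ⁻¹' {0}, hφm (measurableSet_singleton 0), hφμ 0 ha,
    fun N hN => measure_mono_null ?_ (ae_iff.1 (hiter N))⟩
  rintro x ⟨hx, hNx⟩ hxN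
  simp only [mem_preimage, mem_singleton_iff] at hx hNx
  rw [hx, hNx, zero_add] at hxN
  exact hN (Nat.dvd_of_mod_eq_zero hxN.symm)

end MeasureTheory

namespace RankOne

variable {X : Type*} [MeasurableSpace X] {μ : Measure X} (R : RankOne X μ)

def level (n j : ℕ) : Set X := R.T^[j] '' R.B n

/-- The level of tower `n + 1` at which the `k`-th copy of tower `n` starts. -/
def offset (n k : ℕ) : ℕ := ∑ j ∈ Finset.Ico 1 k, (R.h n + R.s n j)

variable {R}

theorem level_disjoint {n i j : ℕ} (hij : i ≠ j) (hi : i < R.h n) (hj : j < R.h n) :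
    Disjoint (R.level n i) (R.level n j) := by
  rcases hij.lt_or_gt with h | h
  · exact R.levels_disjoint n i j h hj
  · exact (R.levels_disjoint n j i h hi).symm

theorem Bp_subset_B {n k : ℕ} (hk : k ∈ Finset.Icc 1 (R.r n)) : R.Bp n k ⊆ R.B n :=
  R.Bp_union n ▸ subset_biUnion_of_mem hk

theorem image_iterate_C_one {n k : ℕ} (hk : k ∈ Finset.Icc 1 (R.r n)) {j : ℕ}
    (hj : j < R.s n k) : R.T^[j] '' R.C n k 1 = R.C n k (j + 1) := by
  induction j with
  | zero => simp
  | succ j ih =>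
    rw [iterate_succ', image_comp, ih (by omega)]
    exact R.spacer_step n k hk (j + 1) (by omega) hj

theorem image_iterate_Bp_succ {n k : ℕ} (hk1 : 1 ≤ k) (hkr : k < R.r n) :
    R.T^[R.h n + R.s n k] '' R.Bp n k = R.Bp n (k + 1) := by
  have hk : k ∈ Finset.Icc 1 (R.r n) := Finset.mem_Icc.2 ⟨hk1, hkr.le⟩
  by_cases hs : R.s n k = 0
  · rw [hs, add_zero]
    exact R.top_to_next n k hk1 hkr hs
  · obtain ⟨m, hm⟩ : ∃ m, R.s n k = m + 1 := Nat.exists_eq_add_one_of_ne_zero hs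
    rw [add_comm, iterate_add, image_comp, R.top_to_spacer n k hk hs, hm, iterate_succ',
      image_comp, image_iterate_C_one hk (by omega), ← hm]
    exact R.spacer_to_next n k hk1 hkr hs

theorem offset_succ (n : ℕ) {k : ℕ} (hk : 1 ≤ k) :
    R.offset n (k + 1) = R.offset n k + (R.h n + R.s n k) :=
  Finset.sum_Ico_succ_top hk _

theorem offset_add_h_le {n k : ℕ} (hk : k ≤ R.r n) : R.offset n k + R.h n ≤ R.h (n + 1) := by
  have hmono : R.offset n k ≤ R.offset n (R.r n) :=
    Finset.sum_le_sum_of_subset (Finset.Ico_subset_Ico_right hk)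
  have htop : R.offset n (R.r n + 1) = R.h (n + 1) := by
    rw [offset, Finset.Ico_add_one_right_eq_Icc, Finset.sum_add_distrib, Finset.sum_const,
      Nat.card_Icc, smul_eq_mul, Nat.add_sub_cancel, R.h_succ]
  rw [offset_succ n (R.r_gt_one n).le] at htop
  omega

theorem Bp_eq_image_offset {n k : ℕ} (hk1 : 1 ≤ k) (hkr : k ≤ R.r n) :
    R.Bp n k = R.T^[R.offset n k] '' R.B (n + 1) := by
  induction k, hk1 using Nat.le_induction with
  | base => simp [offset, R.base_succ]
  | succ k hk1 ih =>
    rw [offset_succ n hk1, add_comm (R.offset n k), iterate_add, image_comp, ← ih (by omega),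
      image_iterate_Bp_succ hk1 (by omega)]

theorem image_iterate_Bp {n k : ℕ} (hk : k ∈ Finset.Icc 1 (R.r n)) (j : ℕ) :
    R.T^[j] '' R.Bp n k = R.level (n + 1) (j + R.offset n k) := by
  rw [Finset.mem_Icc] at hk
  rw [Bp_eq_image_offset hk.1 hk.2, level, iterate_add, image_comp]

theorem level_eq_biUnion_level_succ (n j : ℕ) :
    R.level n j = ⋃ k ∈ Finset.Icc 1 (R.r n), R.level (n + 1) (j + R.offset n k) := by
  rw [level, ← R.Bp_union n, image_iUnion₂]
  exact iUnion₂_congr fun k hk => image_iterate_Bp hk j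

theorem exists_biUnion_level_eq {m n : ℕ} (hmn : m ≤ n) {J : Finset ℕ}
    (hJ : ∀ j ∈ J, j < R.h m) :
    ∃ J' : Finset ℕ, (∀ j ∈ J', j < R.h n) ∧ ⋃ j ∈ J', R.level n j = ⋃ j ∈ J, R.level m j := by
  induction n, hmn using Nat.le_induction with
  | base => exact ⟨J, hJ, rfl⟩
  | succ n _ ih =>
    obtain ⟨J', hJ', hU⟩ := ih
    refine ⟨J'.biUnion fun j => (Finset.Icc 1 (R.r n)).image (j + R.offset n ·), ?_, ?_⟩
    · simp only [Finset.mem_biUnion, Finset.mem_image, Finset.mem_Icc]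
      rintro _ ⟨j, hj, k, ⟨-, hk⟩, rfl⟩
      have := offset_add_h_le hk
      have := hJ' j hj
      omega
    · rw [← hU, Finset.set_biUnion_biUnion]
      refine iUnion₂_congr fun j _ => ?_
      rw [level_eq_biUnion_level_succ, Finset.set_biUnion_finset_image]

theorem exists_forall_level_inter_lt_or_diff_lt {t : Set X} (ht : MeasurableSet t)
    {ε : ℝ≥0∞} (hε : 0 < ε) :
    ∃ m, ∀ n ≥ m, ∀ j < R.h n, μ (R.level n j ∩ t) < ε ∨ μ (R.level n j \ t) < ε := by
  obtain ⟨m, J, hJ, happrox⟩ := R.levels_dense t ht ε hε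
  refine ⟨m, fun n hmn j hj => ?_⟩
  obtain ⟨J', hJ', hU⟩ := exists_biUnion_level_eq hmn hJ
  change μ (symmDiff t (⋃ i ∈ J, R.level m i)) < ε at happrox
  rw [← hU] at happrox
  by_cases hjJ : j ∈ J'
  · refine Or.inr ((measure_mono fun x hx => ?_).trans_lt happrox)
    exact Or.inr ⟨mem_biUnion hjJ hx.1, hx.2⟩
  · refine Or.inl ((measure_mono fun x hx => Or.inl ⟨hx.2, ?_⟩).trans_lt happrox)
    simp only [mem_iUnion]
    rintro ⟨i, hi, hxi⟩
    exact disjoint_left.1 (level_disjoint (ne_of_mem_of_not_mem hi hjJ) (hJ' i hi) hj) hxi hx.1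

theorem measure_Bp_eq_measure_B_succ {n k : ℕ} (hk : k ∈ Finset.Icc 1 (R.r n)) :
    μ (R.Bp n k) = μ (R.B (n + 1)) := by
  rw [R.base_succ, R.Bp_measure n k hk,
    R.Bp_measure n 1 (Finset.mem_Icc.2 ⟨le_rfl, (R.r_gt_one n).le⟩)]

theorem measure_B_eq_mul {n k : ℕ} (hk : k ∈ Finset.Icc 1 (R.r n)) :
    μ (R.B n) = R.r n * μ (R.Bp n k) := by
  rw [R.Bp_measure n k hk, ENNReal.mul_div_cancel
    (Nat.cast_ne_zero.2 (R.r_gt_one n).ne_bot) (ENNReal.natCast_ne_top _)]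

theorem measure_level_add_le {n j : ℕ} (hj : j ≤ R.h n) :
    μ (R.level n j) + μ (R.B (n + 1)) ≤ μ (R.B n) + μ (R.T^[j] '' R.Bp n (R.r n)) := by
  have hr := R.r_gt_one n
  have h1 : 1 ∈ Finset.Icc 1 (R.r n) := Finset.mem_Icc.2 ⟨le_rfl, hr.le⟩
  have hsplit : R.level n j =
      R.T^[j] '' R.Bp n (R.r n) ∪ ⋃ k ∈ Finset.Ico 1 (R.r n), R.T^[j] '' R.Bp n k := by
    rw [level, ← R.Bp_union n, ← Finset.Ico_insert_right hr.le, Finset.set_biUnion_insert,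
      image_union, image_iUnion₂]
  -- The copies below the last one are carried onto the next copy by `T^[h n + s n k]`.
  have hlow : ∀ k ∈ Finset.Ico 1 (R.r n), μ (R.T^[j] '' R.Bp n k) ≤ μ (R.B (n + 1)) := by
    intro k hk
    rw [Finset.mem_Ico] at hk
    calc μ (R.T^[j] '' R.Bp n k)
        ≤ μ (R.T^[R.h n + R.s n k - j] '' (R.T^[j] '' R.Bp n k)) :=
          (R.mpT.iterate _).measure_le_image _
      _ = μ (R.B (n + 1)) := by
          rw [← image_comp, ← iterate_add, Nat.sub_add_cancel (by omega),
            image_iterate_Bp_succ hk.1 hk.2,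
            measure_Bp_eq_measure_B_succ (Finset.mem_Icc.2 ⟨by omega, by omega⟩)]
  calc μ (R.level n j) + μ (R.B (n + 1))
      ≤ μ (R.T^[j] '' R.Bp n (R.r n)) + (R.r n - 1 : ℕ) * μ (R.B (n + 1)) + μ (R.B (n + 1)) := by
        gcongr
        rw [hsplit]
        refine (measure_union_le _ _).trans (add_le_add le_rfl ?_)
        refine (measure_biUnion_finset_le _ _).trans ((Finset.sum_le_sum hlow).trans_eq ?_)
        rw [Finset.sum_const, Nat.card_Ico, nsmul_eq_mul]
      _ = μ (R.B n) + μ (R.T^[j] '' R.Bp n (R.r n)) := by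
        rw [add_assoc, ← add_one_mul, measure_B_eq_mul h1, measure_Bp_eq_measure_B_succ h1,
          add_comm]
        norm_cast
        rw [Nat.sub_add_cancel hr.le]

theorem measure_level_le [StandardBorelSpace X] [IsFiniteMeasure μ] [NullSingletonClass μ]
    {n j : ℕ} (hj : j < R.h n) : μ (R.level n j) ≤ μ (R.B n) := by
  -- `S k` is the part of `level n j` lying in the last copy of tower `n + i` for every `i < k`.
  set pos : ℕ → ℕ := fun k => j + ∑ i ∈ Finset.range k, R.offset (n + i) (R.r (n + i))
  set S : ℕ → Set X := fun k => R.level (n + k) (pos k)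
  have hpos : ∀ k, pos k < R.h (n + k) := by
    intro k
    induction k with
    | zero => simpa [pos] using hj
    | succ k ih =>
      have := offset_add_h_le (R := R) (le_refl (R.r (n + k)))
      simp only [pos, Finset.sum_range_succ] at ih ⊢
      rw [← add_assoc n k 1]
      omega
  have hS_succ : ∀ k, S (k + 1) = R.T^[pos k] '' R.Bp (n + k) (R.r (n + k)) := by
    intro k
    rw [image_iterate_Bp (Finset.mem_Icc.2 ⟨(R.r_gt_one _).le, le_rfl⟩)]
    simp only [S, pos, Finset.sum_range_succ, add_assoc]
  have hS_anti : Antitone S := antitone_nat_of_succ_le fun k => by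
    rw [hS_succ]
    exact image_mono (Bp_subset_B (Finset.mem_Icc.2 ⟨(R.r_gt_one _).le, le_rfl⟩))
  have htel : ∀ k, μ (S 0) + μ (R.B (n + k)) ≤ μ (R.B n) + μ (S k) :=
    ENNReal.add_le_add_of_forall_add_succ_le (a := fun k => μ (S k))
      (b := fun k => μ (R.B (n + k))) (fun k => measure_ne_top μ _) fun k => by
      rw [hS_succ]
      exact measure_level_add_le (hpos k).le
  have hinf : ⨅ k, μ (S k) = 0 := hS_anti.iInf_measure_eq_zero fun t ht ε hε => by
    obtain ⟨m, hm⟩ := exists_forall_level_inter_lt_or_diff_lt (R := R) ht hε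
    exact ⟨m, hm (n + m) (Nat.le_add_left m n) _ (hpos m)⟩
  calc μ (R.level n j) = μ (S 0) := by simp [S, pos]
    _ ≤ ⨅ k, (μ (R.B n) + μ (S k)) := le_iInf fun k => le_self_add.trans (htel k)
    _ = μ (R.B n) := by rw [← ENNReal.add_iInf, hinf, add_zero]

theorem ae_forall_iterate_T_Tinv : ∀ᵐ y ∂μ, ∀ i, R.T^[i] (R.Tinv^[i] y) = y := by
  rw [ae_all_iff]
  intro i
  induction i with
  | zero => simp
  | succ i ih =>
    filter_upwards [R.mpTinv.quasiMeasurePreserving.ae ih, R.inv_right] with y h1 h2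
    rw [iterate_succ_apply' R.T, iterate_succ_apply R.Tinv, h1, h2]

theorem card_mul_measure_Bp_le {n k : ℕ} (hk1 : 1 ≤ k) (hkr : k < R.r n) {J : Finset ℕ}
    (hJ : ∀ j ∈ J, j < R.h n) :
    J.card * μ (R.Bp n k) ≤ μ ((⋃ j ∈ J, R.level n j) ∩
      R.T^[R.h n + R.s n k] ⁻¹' ⋃ j ∈ J, R.level n j) := by
  set N := R.h n + R.s n k
  -- Measurable stand-ins for the (possibly non-measurable) sets `T^[j] '' Bp n k`.
  set Q : ℕ → Set X := fun j => R.Tinv^[j] ⁻¹' R.Bp n k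
  have hQm : ∀ j, MeasurableSet (Q j) := fun j =>
    R.mpTinv.measurable.iterate j (R.Bp_meas n k)
  have hQ : ∀ᵐ y ∂μ, ∀ j, y ∈ Q j → y ∈ R.level n j ∧ R.T^[N] y ∈ R.level n j := by
    filter_upwards [ae_forall_iterate_T_Tinv] with y hy j hyQ
    have hkr' : k + 1 ∈ Finset.Icc 1 (R.r n) := Finset.mem_Icc.2 ⟨by omega, hkr⟩
    refine ⟨⟨_, Bp_subset_B (Finset.mem_Icc.2 ⟨hk1, hkr.le⟩) hyQ, hy j⟩, ⟨R.T^[N] (R.Tinv^[j] y),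
      Bp_subset_B hkr' (image_iterate_Bp_succ hk1 hkr ▸ mem_image_of_mem _ hyQ), ?_⟩⟩
    rw [← iterate_add_apply, add_comm, iterate_add_apply, hy j]
  have hQdisj : Set.Pairwise J (AEDisjoint μ on Q) := fun i hi j hj hij => by
    refine measure_eq_zero_iff_ae_notMem.2 ?_
    filter_upwards [hQ] with y hy ⟨hyi, hyj⟩
    exact disjoint_left.1 (level_disjoint hij (hJ i hi) (hJ j hj)) (hy i hyi).1 (hy j hyj).1
  calc J.card * μ (R.Bp n k) = μ (⋃ j ∈ J, Q j) := by
        rw [measure_biUnion_finset₀ hQdisj fun j _ => (hQm j).nullMeasurableSet]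
        simp [Q, (R.mpTinv.iterate _).measure_preimage (R.Bp_meas n k).nullMeasurableSet]
    _ ≤ _ := measure_mono_ae <| hQ.mono fun y hy hyQ => by
        obtain ⟨j, hj, hyj⟩ := mem_iUnion₂.1 hyQ
        exact ⟨mem_biUnion hj (hy j hyj).1, mem_biUnion hj (hy j hyj).2⟩

theorem dvd_h_add_s_of_measure_symmDiff_lt [StandardBorelSpace X] [IsFiniteMeasure μ]
    [NullSingletonClass μ] {A : Set X} {a : ℕ}
    (hA : ∀ N, ¬ a ∣ N → μ (A ∩ R.T^[N] ⁻¹' A) = 0) {n : ℕ} {J : Finset ℕ}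
    (hJ : ∀ j ∈ J, j < R.h n)
    (happrox : μ (symmDiff A (⋃ j ∈ J, R.level n j)) * (2 * R.r n + 1) < μ A)
    {k : ℕ} (hk1 : 1 ≤ k) (hkr : k < R.r n) : a ∣ R.h n + R.s n k := by
  by_contra hdvd
  set U := ⋃ j ∈ J, R.level n j
  set δ := μ (symmDiff A U)
  have hcopy : J.card * μ (R.Bp n k) ≤ 2 * δ :=
    calc J.card * μ (R.Bp n k) ≤ μ (U ∩ R.T^[R.h n + R.s n k] ⁻¹' U) :=
          card_mul_measure_Bp_le hk1 hkr hJ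
      _ ≤ μ (A ∩ R.T^[R.h n + R.s n k] ⁻¹' A) + 2 * μ (U \ A) :=
          (R.mpT.iterate _).measure_inter_preimage_le A U
      _ ≤ 2 * δ := by
          rw [hA _ hdvd, zero_add]
          exact mul_le_mul_right (measure_mono fun x hx => Or.inr hx) 2
  have hU : μ U ≤ R.r n * (2 * δ) :=
    calc μ U ≤ ∑ j ∈ J, μ (R.level n j) := measure_biUnion_finset_le _ _
      _ ≤ ∑ j ∈ J, μ (R.B n) := Finset.sum_le_sum fun j hj => measure_level_le (hJ j hj)
      _ = R.r n * (J.card * μ (R.Bp n k)) := by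
          rw [Finset.sum_const, nsmul_eq_mul,
            measure_B_eq_mul (Finset.mem_Icc.2 ⟨hk1, hkr.le⟩)]
          ring
      _ ≤ R.r n * (2 * δ) := by gcongr
  have hAδ : μ A ≤ δ * (2 * R.r n + 1) :=
    calc μ A ≤ μ (A \ U) + μ U :=
          (measure_mono (subset_sdiff_union A U)).trans (measure_union_le _ _)
      _ ≤ δ + R.r n * (2 * δ) := add_le_add (measure_mono fun x hx => Or.inl hx) hU
      _ = δ * (2 * R.r n + 1) := by ring
  exact (hAδ.trans_lt happrox).false

end RankOne

theorem statement17_general {X : Type*} [MeasurableSpace X] [StandardBorelSpace X]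
    (μ : MeasureTheory.Measure X) [MeasureTheory.IsProbabilityMeasure μ]
    [MeasureTheory.NullSingletonClass μ]
    (R : RankOne X μ)
    (hr : ∀ n, R.r n = 4)
    (hs1 : ∀ n, R.s n 1 = 0) (hs2 : ∀ n, R.s n 2 = 2 ^ (n + 1)) :
    ∀ a : ℕ, Odd a → 3 ≤ a → ¬ FactorsOntoCyclic μ R.T a := by
  intro a ha_odd ha3 hfactor
  obtain ⟨A, hAm, hμA, hA⟩ :=
    hfactor.exists_measure_inter_preimage_iterate_eq_zero R.mpT (by omega)
  have hA0 : μ A ≠ 0 := by simp [hμA]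
  obtain ⟨n, J, hJ, happrox⟩ :=
    R.levels_dense A hAm (μ A / 9) (ENNReal.div_pos hA0 (by norm_num))
  have happrox' : μ (symmDiff A (⋃ j ∈ J, R.level n j)) * (2 * R.r n + 1) < μ A := by
    rw [hr, show 2 * ((4 : ℕ) : ℝ≥0∞) + 1 = 9 by norm_num]
    exact (ENNReal.lt_div_iff_mul_lt (by norm_num) (by norm_num)).1 happrox
  have hdvd : ∀ k, 1 ≤ k → k < 4 → a ∣ R.h n + R.s n k := fun k hk1 hk4 =>
    RankOne.dvd_h_add_s_of_measure_symmDiff_lt hA hJ happrox' hk1 (hr n ▸ hk4)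
  have h1 := hdvd 1 le_rfl (by norm_num)
  have h2 := hdvd 2 (by norm_num) (by norm_num)
  rw [hs1, add_zero] at h1
  rw [hs2] at h2
  have ha1 := (Nat.coprime_two_right.2 ha_odd).pow_right (n + 1)
    |>.eq_one_of_dvd ((Nat.dvd_add_right h1).1 h2)
  omega

theorem statement17 {X : Type*} [MeasurableSpace X] [StandardBorelSpace X]
    (μ : MeasureTheory.Measure X) [MeasureTheory.IsProbabilityMeasure μ]
    [MeasureTheory.NullSingletonClass μ]
    (R : RankOne X μ)
    (hr : ∀ n, R.r n = 4)
    (hs1 : ∀ n, R.s n 1 = 0) (hs2 : ∀ n, R.s n 2 = 2 ^ (n + 1))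
    (hs3 : ∀ n, R.s n 3 = 0) (hs4 : ∀ n, R.s n 4 = 0) :
    ∀ a : ℕ, Odd a → 3 ≤ a → ¬ FactorsOntoCyclic μ R.T a :=
  statement17_general μ R hr hs1 hs2
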